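/- The labeling λ_{•2}, which assigns to each cover relation of Π_n^• the same label as λ_• but orders the labels in the poset Λ_n^w, is an EL-labeling of the pointed partition poset Π_n^•: every closed interval of Π_n^• contains a unique increasing maximal chain, and this chain lexicographically precedes every other maximal chain of the interval. Consequently Π_n^• is EL-shellable and all its maximal intervals [0̂,[n]^p] are Cohen-Macaulay. -/

import Mathlib

open Finset

open scoped BigOperators Classical

/-! ## Generic machinery for edge labelings of posets presented by cover relations -/

section Chains

variable {α : Type*} {L : Type*}

/-- The word of labels read along a list of poset elements. -/
def wordOf (lab : α → α → L) : List α → List L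
  | x :: y :: rest => lab x y :: wordOf lab (y :: rest)
  | _ => []

/-- `c` is a saturated chain from `x` to `y` with respect to the cover relation `cov`;
in a graded poset these are exactly the maximal chains of the interval `[x, y]`. -/
def IsSatChain (cov : α → α → Prop) (x y : α) (c : List α) : Prop :=
  c.Chain' cov ∧ c.head? = some x ∧ c.getLast? = some y

/-- A word of labels is increasing if consecutive labels strictly increase. -/
def IncWord (lt : L → L → Prop) (w : List L) : Prop := w.Chain' lt

/-- A word of labels is ascent-free if no consecutive pair of labels strictly increases. -/
def AscFree (lt : L → L → Prop) (w : List L) : Prop := w.Chain' fun a b => ¬ lt a b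

/-- The partial order generated by a cover relation. -/
def leOf (cov : α → α → Prop) : α → α → Prop := Relation.ReflTransGen cov

/-- The strict order generated by a cover relation. -/
def ltOf (cov : α → α → Prop) (a b : α) : Prop := leOf cov a b ∧ a ≠ b

/-- An ER-labeling: every closed interval has a unique increasing maximal chain. -/
def IsERLabeling (cov : α → α → Prop) (lab : α → α → L) (lt : L → L → Prop) : Prop :=
  ∀ x y, leOf cov x y → ∃! c, IsSatChain cov x y c ∧ IncWord lt (wordOf lab c)

/-- The rank two switching property: in every rank-two interval whose increasing chain
has word of labels `ab`, there is a unique chain with word of labels `ba`. -/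
def RankTwoSwitch (cov : α → α → Prop) (lab : α → α → L) (lt : L → L → Prop) : Prop :=
  ∀ x y c a b, IsSatChain cov x y c → IncWord lt (wordOf lab c) → wordOf lab c = [a, b] →
    ∃! c', IsSatChain cov x y c' ∧ wordOf lab c' = [b, a]

/-- In every interval, distinct ascent-free maximal chains have distinct label words. -/
def AscFreeInj (cov : α → α → Prop) (lab : α → α → L) (lt : L → L → Prop) : Prop :=
  ∀ x y c c', IsSatChain cov x y c → IsSatChain cov x y c' →
    AscFree lt (wordOf lab c) → AscFree lt (wordOf lab c') →
    wordOf lab c = wordOf lab c' → c = c'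

/-- An EW-labeling. -/
def IsEWLabeling (cov : α → α → Prop) (lab : α → α → L) (lt : L → L → Prop) : Prop :=
  IsERLabeling cov lab lt ∧ RankTwoSwitch cov lab lt ∧ AscFreeInj cov lab lt

/-- An EL-labeling: every closed interval has a unique increasing maximal chain,
which lexicographically precedes every other maximal chain of the interval. -/
def IsELLabeling (cov : α → α → Prop) (lab : α → α → L) (lt : L → L → Prop) : Prop :=
  ∀ x y, leOf cov x y →
    ∃ c, (IsSatChain cov x y c ∧ IncWord lt (wordOf lab c)) ∧
      ∀ c', IsSatChain cov x y c' → c' ≠ c →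
        ¬ IncWord lt (wordOf lab c') ∧ List.Lex lt (wordOf lab c) (wordOf lab c')

end Chains

/-! ## Möbius functions and Whitney numbers -/

section Whitney

variable {α : Type*} {β : Type*}

/-- Auxiliary Möbius function computed with fuel; for an element of rank `k` of a
graded poset, fuel `k` computes the one-variable Möbius function `μ(0̂, ·)`. -/
noncomputable def muAux (ltr : α → α → Prop) (bot : α) : ℕ → α → ℤ
  | 0, x => if x = bot then 1 else 0
  | k + 1, x => if x = bot then 1 else - ∑ᶠ (y : α) (_ : ltr y x), muAux ltr bot k y

/-- The one-variable Möbius function `μ(0̂, x)` of a graded poset presented by its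
cover relation `cov`, minimum `bot` and rank function `rk`. -/
noncomputable def muBot (cov : α → α → Prop) (bot : α) (rk : α → ℕ) (x : α) : ℤ :=
  muAux (ltOf cov) bot (rk x) x

/-- The `k`-th Whitney number of the first kind. -/
noncomputable def whitney1 (cov : α → α → Prop) (bot : α) (rk : α → ℕ) (k : ℕ) : ℤ :=
  ∑ᶠ (x : α) (_ : rk x = k), muBot cov bot rk x

/-- The `k`-th Whitney number of the second kind. -/
noncomputable def whitney2 (rk : α → ℕ) (k : ℕ) : ℕ :=
  Nat.card {x : α // rk x = k}

/-- Two graded posets are Whitney duals if their Whitney numbers of the first and second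
kind are swapped (up to sign). -/
def IsWhitneyDual (covP : α → α → Prop) (botP : α) (rkP : α → ℕ)
    (covQ : β → β → Prop) (botQ : β) (rkQ : β → ℕ) : Prop :=
  ∀ k, (whitney1 covP botP rkP k).natAbs = whitney2 rkQ k ∧
       (whitney1 covQ botQ rkQ k).natAbs = whitney2 rkP k

/-- Two graded posets are Whitney twins if they have the same Whitney numbers of the first
and of the second kind. -/
def IsWhitneyTwin (covP : α → α → Prop) (botP : α) (rkP : α → ℕ)
    (covQ : β → β → Prop) (botQ : β) (rkQ : β → ℕ) : Prop :=
  ∀ k, whitney1 covP botP rkP k = whitney1 covQ botQ rkQ k ∧ whitney2 rkP k = whitney2 rkQ k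

/-- `(cov, bot, rk)` presents a graded poset with minimum `bot`. -/
def IsGradedPoset (cov : α → α → Prop) (bot : α) (rk : α → ℕ) : Prop :=
  (∀ x, leOf cov bot x) ∧ rk bot = 0 ∧ ∀ x y, cov x y → rk y = rk x + 1

/-- A graded poset has a Whitney dual. -/
def HasWhitneyDual {γ : Type} (cov : γ → γ → Prop) (bot : γ) (rk : γ → ℕ) : Prop :=
  ∃ (β : Type) (_ : Finite β) (covQ : β → β → Prop) (botQ : β) (rkQ : β → ℕ),
    IsGradedPoset covQ botQ rkQ ∧ IsWhitneyDual cov bot rk covQ botQ rkQ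

/-- Isomorphism of the posets generated by two cover relations. -/
def CovPosetIso (covP : α → α → Prop) (covQ : β → β → Prop) : Prop :=
  ∃ e : α ≃ β, ∀ x y, leOf covP x y ↔ leOf covQ (e x) (e y)

end Whitney

/-! ## The label posets `Λₙʷ` and `Λₙ•` (strict order relations)

Labels are triples `(a, b, u)` with `a < b` in `[n]` and `u ∈ {0,1}` (encoded as `Bool`). -/

/-- The strict order of `Λₙʷ = Γ₁ ⊕ ⋯ ⊕ Γ_{n-1}` where `Γ_a` carries the product order
`(a,b)ᵘ ≤ (a,c)ᵛ ↔ b ≤ c ∧ u ≤ v`. -/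
def ltLw (x y : ℕ × ℕ × Bool) : Prop :=
  x.1 < y.1 ∨ (x.1 = y.1 ∧ x.2.1 ≤ y.2.1 ∧ x.2.2 ≤ y.2.2 ∧ x.2 ≠ y.2)

/-- The strict order of `Λₙ• = A₁ ⊕ C₁ ⊕ ⋯ ⊕ A_{n-1} ⊕ C_{n-1}` where `A_a` is the
antichain of the `(a,b)⁰` and `C_a` is the chain of the `(a,b)¹` ordered by `b`. -/
def ltLp (x y : ℕ × ℕ × Bool) : Prop :=
  x.1 < y.1 ∨ (x.1 = y.1 ∧
    ((x.2.2 = false ∧ y.2.2 = true) ∨ (x.2.2 = true ∧ y.2.2 = true ∧ x.2.1 < y.2.1)))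

/-! ## Pointed and weighted partition posets -/

/-- The minimum of a finite set of naturals (`0` for the empty set). -/
def minB (B : Finset ℕ) : ℕ := B.min.untopD 0

/-- Pointed partitions of the ground set `A`: partitions of `A` into blocks, each block
carrying a distinguished (pointed) element.  A pointed block is a pair `(B, p)` with `p ∈ B`. -/
abbrev PPart (A : Finset ℕ) : Type :=
  {π : Finset (Finset ℕ × ℕ) //
    (∀ b ∈ π, b.2 ∈ b.1) ∧
    (∀ b ∈ π, ∀ b' ∈ π, b ≠ b' → Disjoint b.1 b'.1) ∧
    π.biUnion Prod.fst = A}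

/-- The cover relation of the pointed partition poset: merge two pointed blocks, the merged
block being pointed at the pointed element of one of the two. -/
def covPP {A : Finset ℕ} (π π' : PPart A) : Prop :=
  ∃ b1 ∈ π.1, ∃ b2 ∈ π.1, minB b1.1 < minB b2.1 ∧
    ∃ p : ℕ, (p = b1.2 ∨ p = b2.2) ∧
      π'.1 = insert (b1.1 ∪ b2.1, p) ((π.1.erase b1).erase b2)

/-- The labeling `λ•` (as a bare label map): the cover `u`-merging blocks `A, B` with
`min A < min B` gets the label `(min A, min B, u)`, where `u = 1` exactly when the merged
block is pointed at the pointed element of `A`. -/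
noncomputable def labPP {A : Finset ℕ} (π π' : PPart A) : ℕ × ℕ × Bool :=
  let olds := π.1 \ π'.1
  let mins := olds.image (fun b => minB b.1)
  (mins.min.untopD 0, mins.max.unbotD 0,
    if ∃ b ∈ olds, minB b.1 = mins.min.untopD 0 ∧ ∃ d ∈ π'.1 \ π.1, d.2 = b.2
      then true else false)

/-- The minimum of the pointed partition poset: all blocks are pointed singletons. -/
def botPP (A : Finset ℕ) : PPart A :=
  ⟨A.image fun i => ({i}, i), by
    refine ⟨?_, ?_, ?_⟩
    · intro b hb
      obtain ⟨i, -, rfl⟩ := Finset.mem_image.1 hb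
      exact Finset.mem_singleton_self i
    · intro b hb b' hb' hne
      obtain ⟨i, -, rfl⟩ := Finset.mem_image.1 hb
      obtain ⟨j, -, rfl⟩ := Finset.mem_image.1 hb'
      have hij : i ≠ j := fun h => hne (by rw [h])
      simp [Finset.disjoint_left, hij]
    · ext x
      simp⟩

/-- The rank function of the pointed partition poset. -/
def rkPP {A : Finset ℕ} (π : PPart A) : ℕ := A.card - π.1.card

/-- Weighted partitions of the ground set `A`: partitions of `A` into blocks, each block `B`
carrying a weight `v` with `0 ≤ v ≤ |B| - 1`. -/
abbrev WPart (A : Finset ℕ) : Type :=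
  {π : Finset (Finset ℕ × ℕ) //
    (∀ b ∈ π, b.2 < b.1.card) ∧
    (∀ b ∈ π, ∀ b' ∈ π, b ≠ b' → Disjoint b.1 b'.1) ∧
    π.biUnion Prod.fst = A}

/-- The cover relation of the weighted partition poset: merge blocks `A^v, B^w` into
`(A ∪ B)^(v+w+u)` for some `u ∈ {0,1}`. -/
def covWP {A : Finset ℕ} (π π' : WPart A) : Prop :=
  ∃ b1 ∈ π.1, ∃ b2 ∈ π.1, minB b1.1 < minB b2.1 ∧ ∃ u : Bool,
    π'.1 = insert (b1.1 ∪ b2.1, b1.2 + b2.2 + (if u then 1 else 0)) ((π.1.erase b1).erase b2)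

/-- The labeling `λ_w` (as a bare label map): the cover merging `A^v, B^w` with
`min A < min B` into `(A ∪ B)^(v+w+u)` gets the label `(min A, min B, u)`. -/
noncomputable def labWP {A : Finset ℕ} (π π' : WPart A) : ℕ × ℕ × Bool :=
  let olds := π.1 \ π'.1
  let mins := olds.image (fun b => minB b.1)
  (mins.min.untopD 0, mins.max.unbotD 0,
    if (π'.1 \ π.1).sum Prod.snd = olds.sum Prod.snd + 1 then true else false)

/-- The minimum of the weighted partition poset: all blocks singletons of weight `0`. -/
def botWP (A : Finset ℕ) : WPart A :=
  ⟨A.image fun i => ({i}, 0), by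
    refine ⟨?_, ?_, ?_⟩
    · intro b hb
      obtain ⟨i, -, rfl⟩ := Finset.mem_image.1 hb
      simp
    · intro b hb b' hb' hne
      obtain ⟨i, -, rfl⟩ := Finset.mem_image.1 hb
      obtain ⟨j, -, rfl⟩ := Finset.mem_image.1 hb'
      have hij : i ≠ j := fun h => hne (by rw [h])
      simp [Finset.disjoint_left, hij]
    · ext x
      simp⟩

/-- The rank function of the weighted partition poset. -/
def rkWP {A : Finset ℕ} (π : WPart A) : ℕ := A.card - π.1.card
/-! ## Bicolored binary trees and Lyndon forests -/

/-- Planar binary trees with `ℕ`-labeled leaves and `Bool`-colored internal vertices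
(`false` = color 0, `true` = color 1). -/
inductive BT : Type
  | leaf : ℕ → BT
  | node : Bool → BT → BT → BT
deriving DecidableEq

namespace BT

/-- The valency: the minimum leaf label of a tree. -/
def nu : BT → ℕ
  | leaf a => a
  | node _ l r => min l.nu r.nu

/-- The set of leaf labels of a tree. -/
def leaves : BT → Finset ℕ
  | leaf a => {a}
  | node _ l r => l.leaves ∪ r.leaves

/-- The number of internal vertices of a tree. -/
def internals : BT → ℕ
  | leaf _ => 0
  | node _ l r => l.internals + r.internals + 1

/-- A tree is normalized if its leaf labels are distinct and every internal vertex has the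
same valency as its left child. -/
def normalized : BT → Prop
  | leaf _ => True
  | node _ l r => l.normalized ∧ r.normalized ∧ Disjoint l.leaves r.leaves ∧ l.nu < r.nu

/-- The pointed Lyndon condition: at every internal vertex `v` with internal left child,
`color (L v) ≥ color v`, and if `color (L v) = color v = 1` then `v` is a Lyndon vertex,
i.e. `ν (R (L v)) > ν (R v)`. -/
def pLyn : BT → Prop
  | leaf _ => True
  | node c l r => l.pLyn ∧ r.pLyn ∧
      (match l with
       | leaf _ => True
       | node c' _ r' => c ≤ c' ∧ ((c' = c ∧ c = true) → r.nu < r'.nu))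

/-- The bicolored Lyndon condition: every internal vertex with internal left child is
Lyndon (`ν (R (L v)) > ν (R v)`) or satisfies `color (L v) > color v`. -/
def wLyn : BT → Prop
  | leaf _ => True
  | node c l r => l.wLyn ∧ r.wLyn ∧
      (match l with
       | leaf _ => True
       | node c' _ r' => r.nu < r'.nu ∨ c < c')

/-- The pointed element of a bicolored tree: a `1`-colored vertex keeps the point of its
left subtree and a `0`-colored vertex keeps the point of its right subtree. -/
def ppt : BT → ℕ
  | leaf a => a
  | node c l r => if c then l.ppt else r.ppt

end BT

/-- `u`-merging of two pointed Lyndon trees: create a new root of color `u` with the two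
trees as subtrees, then repeatedly slide the new vertex together with its right subtree
past its left child until the pointed Lyndon condition holds at the new vertex. -/
def mergeP (u : Bool) : BT → BT → BT
  | BT.leaf a, t2 => BT.node u (BT.leaf a) t2
  | BT.node c a b, t2 =>
      if u ≤ c ∧ ((c = true ∧ u = true) → t2.nu < b.nu)
      then BT.node u (BT.node c a b) t2
      else BT.node c (mergeP u a t2) b

/-- `u`-merging of two bicolored Lyndon trees: create a new root of color `u` with the two
trees as subtrees, then repeatedly slide the new vertex together with its right subtree
past its left child until the bicolored Lyndon condition holds at the new vertex. -/
def mergeW (u : Bool) : BT → BT → BT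
  | BT.leaf a, t2 => BT.node u (BT.leaf a) t2
  | BT.node c a b, t2 =>
      if t2.nu < b.nu ∨ u < c
      then BT.node u (BT.node c a b) t2
      else BT.node c (mergeW u a t2) b

/-- A valid forest on the ground set `[n]`, each tree normalized and satisfying `P`, the
trees having pairwise disjoint leaf sets which together cover `[n] = {1, …, n}`. -/
def ForestValid (n : ℕ) (P : BT → Prop) (F : Finset BT) : Prop :=
  (∀ t ∈ F, t.normalized ∧ P t) ∧
  (∀ t ∈ F, ∀ t' ∈ F, t ≠ t' → Disjoint t.leaves t'.leaves) ∧
  F.biUnion BT.leaves = Finset.Icc 1 n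

/-- The set of pointed Lyndon forests on `[n]`. -/
abbrev FLynP (n : ℕ) : Type := {F : Finset BT // ForestValid n BT.pLyn F}

/-- The set of bicolored Lyndon forests on `[n]`. -/
abbrev FLynW (n : ℕ) : Type := {F : Finset BT // ForestValid n BT.wLyn F}

/-- The cover relation on forests: `u`-merge two of the trees (the one with smaller minimum
leaf label going to the left). -/
def covForest (merge : Bool → BT → BT → BT) (F F' : Finset BT) : Prop :=
  ∃ t1 ∈ F, ∃ t2 ∈ F, t1.nu < t2.nu ∧ ∃ u : Bool,
    F' = insert (merge u t1 t2) ((F.erase t1).erase t2)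

/-- The cover relation of the poset of pointed Lyndon forests `FLyn_n^•`. -/
def covFP {n : ℕ} (F F' : FLynP n) : Prop := covForest mergeP F.1 F'.1

/-- The cover relation of the poset of bicolored Lyndon forests `FLyn_n^w`. -/
def covFW {n : ℕ} (F F' : FLynW n) : Prop := covForest mergeW F.1 F'.1

/-- The forest of `n` isolated leaves. -/
def botForest (n : ℕ) : Finset BT := (Finset.Icc 1 n).image BT.leaf

theorem botForest_valid (n : ℕ) (P : BT → Prop) (hP : ∀ a, P (BT.leaf a)) :
    ForestValid n P (botForest n) := by
  refine ⟨?_, ?_, ?_⟩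
  · intro t ht
    obtain ⟨i, -, rfl⟩ := Finset.mem_image.1 ht
    exact ⟨trivial, hP i⟩
  · intro t ht t' ht' hne
    obtain ⟨i, -, rfl⟩ := Finset.mem_image.1 ht
    obtain ⟨j, -, rfl⟩ := Finset.mem_image.1 ht'
    have hij : i ≠ j := fun h => hne (by rw [h])
    simp only [BT.leaves]
    simp [Finset.disjoint_left, hij]
  · ext x
    simp [botForest, BT.leaves]

/-- The minimum of the poset of pointed Lyndon forests. -/
def botFP (n : ℕ) : FLynP n := ⟨botForest n, botForest_valid n _ fun _ => trivial⟩

/-- The minimum of the poset of bicolored Lyndon forests. -/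
def botFW (n : ℕ) : FLynW n := ⟨botForest n, botForest_valid n _ fun _ => trivial⟩

/-- The rank of a forest: its total number of internal vertices. -/
def rkForest (F : Finset BT) : ℕ := F.sum BT.internals

/-- The rank function of `FLyn_n^•`. -/
def rkFP {n : ℕ} (F : FLynP n) : ℕ := rkForest F.1

/-- The rank function of `FLyn_n^w`. -/
def rkFW {n : ℕ} (F : FLynW n) : ℕ := rkForest F.1

/-! ## The Whitney dual construction `R_λ(P)` -/

section RPoset

variable {α : Type*} {L : Type*}

/-- Swap the leftmost ascent of a word of labels. -/
noncomputable def swapFirstAscent (lt : L → L → Prop) : List L → List L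
  | a :: b :: rest => if lt a b then b :: a :: rest else a :: swapFirstAscent lt (b :: rest)
  | w => w

/-- Sort a word of labels by repeatedly swapping its leftmost ascent until it is
ascent-free. -/
noncomputable def sortWord (lt : L → L → Prop) (w : List L) : List L :=
  (swapFirstAscent lt)^[w.length * w.length] w

/-- The underlying set of the Whitney dual `R_λ(P)`: pairs `(x, w)` where `w` is the label
word of an ascent-free saturated chain from `0̂` to `x`. -/
abbrev RPoset (cov : α → α → Prop) (lab : α → α → L) (lt : L → L → Prop) (bot : α) : Type _ :=
  {q : α × List L //
    ∃ c, IsSatChain cov bot q.1 c ∧ AscFree lt (wordOf lab c) ∧ wordOf lab c = q.2}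

/-- The cover relation of `R_λ(P)`: `(x, w) ⋖ (y, u)` iff `x ⋖ y` and `u` is obtained by
sorting the label of `x ⋖ y` into `w`. -/
def covR (cov : α → α → Prop) (lab : α → α → L) (lt : L → L → Prop) (bot : α)
    (p q : RPoset cov lab lt bot) : Prop :=
  cov p.1.1 q.1.1 ∧ q.1.2 = sortWord lt (p.1.2 ++ [lab p.1.1 q.1.1])

end RPoset

/-! ## Reiner's poset of rooted spanning forests -/

/-- A rooted spanning forest on `[n]`, encoded by its parent function: `f i` is the parent
of the vertex `i` (`f i = i` for roots), vertices outside `[n]` being fixed, and every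
vertex reaching a root after finitely many steps (acyclicity). -/
def SFvalid (n : ℕ) (f : ℕ → ℕ) : Prop :=
  (∀ i ∈ Finset.Icc 1 n, f i ∈ Finset.Icc 1 n) ∧
  (∀ i, i ∉ Finset.Icc 1 n → f i = i) ∧
  (∀ i, ∃ k, f^[k + 1] i = f^[k] i)

/-- Reiner's poset `SF_n` of rooted spanning forests of the complete graph on `[n]`. -/
abbrev SF (n : ℕ) : Type := {f : ℕ → ℕ // SFvalid n f}

/-- The cover relation of `SF_n`: add an edge between the roots of two trees, one of the
two roots becoming the root of the merged tree. -/
def covSF {n : ℕ} (f g : SF n) : Prop :=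
  ∃ r1 ∈ Finset.Icc 1 n, ∃ r2 ∈ Finset.Icc 1 n, r1 ≠ r2 ∧
    f.1 r1 = r1 ∧ f.1 r2 = r2 ∧
    (g.1 = Function.update f.1 r1 r2 ∨ g.1 = Function.update f.1 r2 r1)

/-- The rank of a rooted spanning forest: its number of edges. -/
def rkSF {n : ℕ} (f : SF n) : ℕ := ((Finset.Icc 1 n).filter fun i => f.1 i ≠ i).card
/-! ## Further constructions used in particular statements -/

/-- The map `Φ` on underlying finsets: a pointed block `(B, q)` of a pointed partition
above `α` is sent to the set of minima of the `α`-blocks contained in `B`, pointed at the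
minimum of the `α`-block containing `q`. -/
noncomputable def PhiMap (af : Finset (Finset ℕ × ℕ)) (pf : Finset (Finset ℕ × ℕ)) :
    Finset (Finset ℕ × ℕ) :=
  pf.image fun b =>
    ((af.filter fun c => c.1 ⊆ b.1).image fun c => minB c.1,
     ((af.filter fun c => b.2 ∈ c.1).image fun c => minB c.1).min.untopD 0)

/-- The expected word of labels of the unique increasing maximal chain of the interval
`[0̂, [n]^p]` of the pointed partition poset:
`(1,2)¹ ⋯ (1,n)¹` if `p = 1`, and `(1,p)⁰ (1,2)¹ ⋯ (1,p-1)¹ (1,p+1)¹ ⋯ (1,n)¹` otherwise. -/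
def expectedWordP (n p : ℕ) : List (ℕ × ℕ × Bool) :=
  let base := (List.range (n - 1)).map fun i => ((1 : ℕ), i + 2, true)
  if p = 1 then base else ((1 : ℕ), p, false) :: base.erase (1, p, true)

/-- Merge two words of labels, each with non-increasing first components, into a single
word with non-increasing first components. -/
def mergeByNu : List (ℕ × ℕ × Bool) → List (ℕ × ℕ × Bool) → List (ℕ × ℕ × Bool)
  | [], ys => ys
  | xs, [] => xs
  | x :: xs, y :: ys =>
      if y.1 ≤ x.1 then x :: mergeByNu xs (y :: ys) else y :: mergeByNu (x :: xs) ys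
termination_by xs ys => xs.length + ys.length

/-- The word of labels of a tree read along the reverse-minimal linear extension of its
internal vertices: the internal vertex `v` contributes `(ν (L v), ν (R v), color v)`, the
vertices being listed with non-increasing valencies (descendants first among equal
valencies). -/
def BT.rmword : BT → List (ℕ × ℕ × Bool)
  | BT.leaf _ => []
  | BT.node c l r => mergeByNu l.rmword r.rmword ++ [(l.nu, r.nu, c)]

/-- The word of labels of the saturated chain `c(F)` associated to a forest `F`, read along
the reverse-minimal linear extension of the internal vertices of `F`. -/
noncomputable def forestWord (F : Finset BT) : List (ℕ × ℕ × Bool) :=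
  (F.toList.map BT.rmword).foldr mergeByNu []

/-- `TLyn_{n,p}^•`: pointed Lyndon trees on `[n]` whose associated chain ends at `[n]^p`,
i.e. whose tracked pointed element is `p`. -/
abbrev TLynBullet (n p : ℕ) : Type :=
  {T : BT // T.normalized ∧ T.pLyn ∧ T.leaves = Finset.Icc 1 n ∧ T.ppt = p}

/-- The labeling `λ̃` of `Πₙ•` proposed by Bellier-Millès, Delcroix-Oger and Hoffbeck:
the cover `u`-merging blocks with minima `a < b` in a pointed partition `π` with `|π|`
blocks is labeled `(b, a + n - |π|)` if `u = 0` and `(b, b + n - |π|)` if `u = 1`. -/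
noncomputable def labT (n : ℕ) {A : Finset ℕ} (π π' : PPart A) : ℕ × ℕ :=
  let olds := π.1 \ π'.1
  let mins := olds.image fun b => minB b.1
  let a := mins.min.untopD 0
  let b := mins.max.unbotD 0
  if ∃ c ∈ olds, minB c.1 = a ∧ ∃ d ∈ π'.1 \ π.1, d.2 = c.2
  then (b, b + n - π.1.card)
  else (b, a + n - π.1.card)

/-- The (strict) lexicographic order on `ℕ × ℕ`. -/
def ltT (x y : ℕ × ℕ) : Prop := x.1 < y.1 ∨ (x.1 = y.1 ∧ x.2 < y.2)

/-!
For `x ≤ y` in `Πₙ•`, let `(a, a₂)` be the lexicographically least pair of elements that lie in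
one block of `y` but in different blocks of `x`. A cover `x ⋖ w ≤ y` merges two blocks whose minima
lie in one block of `y`, so its label is at least `(a, a₂, u)` in `Λₙʷ`, where `u = 1` iff the
block of `a` in `x` contains the point of the block of `a` in `y`. Exactly one cover attains this
label, and every cover above it inside `[x, y]` has a larger one; induction on the number of
blocks gives an increasing chain that is lexicographically first.

No other chain is increasing. If its first step does not join `a` and `a₂`, a later step does,
with a label `(a, b, ·)`, `b ≤ a₂`, that is too small. If it joins them with label `(a, a₂, 1)`
while `u = 0`, every later label `(a, ·, ·)` has colour `1`, so the block of `a` stays pointed at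
the point of the block of `a` in `x`, which is not the point required by `y`.
-/

section LabeledPosets

variable {α L : Type*} {cov : α → α → Prop} {lab : α → α → L} {lt : L → L → Prop}
  {x y z : α}

theorem isSatChain_singleton_iff : IsSatChain cov x y [x] ↔ x = y :=
  ⟨fun h => Option.some_injective _ h.2.2, fun h => ⟨List.isChain_singleton x, rfl, h ▸ rfl⟩⟩

theorem isSatChain_cons_cons_iff {rest : List α} :
    IsSatChain cov x y (x :: z :: rest) ↔ cov x z ∧ IsSatChain cov z y (z :: rest) := by
  constructor
  · rintro ⟨hch, -, hlast⟩
    exact ⟨(List.isChain_cons_cons.1 hch).1, (List.isChain_cons_cons.1 hch).2, rfl, hlast⟩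
  · rintro ⟨hcov, hch, -, hlast⟩
    exact ⟨List.isChain_cons_cons.2 ⟨hcov, hch⟩, rfl, hlast⟩

theorem IsSatChain.exists_eq_cons {c : List α} (h : IsSatChain cov x y c) :
    ∃ rest, c = x :: rest := by
  obtain ⟨_, hhead, _⟩ := h
  cases c with
  | nil => simp at hhead
  | cons x' rest => exact ⟨rest, by simpa using hhead⟩

theorem IsSatChain.leOf : ∀ {x : α} {rest : List α},
    IsSatChain cov x y (x :: rest) → leOf cov x y
  | _, [], h => isSatChain_singleton_iff.1 h ▸ Relation.ReflTransGen.refl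
  | _, _ :: _, h =>
    have ⟨hcov, htail⟩ := isSatChain_cons_cons_iff.1 h
    Relation.ReflTransGen.head hcov htail.leOf

theorem rk_le_of_leOf (rk : α → ℕ) (hrk : ∀ x z, cov x z → rk z < rk x)
    (h : leOf cov x y) : rk y ≤ rk x := by
  induction h with
  | refl => rfl
  | tail _ hcov ih => exact (hrk _ _ hcov).le.trans ih

theorem IncWord.lt_of_mem [IsTrans L lt] {ℓ ℓ' : L} {w : List L} (h : IncWord lt (ℓ :: w))
    (h' : ℓ' ∈ w) : lt ℓ ℓ' :=
  (List.pairwise_cons.1 (List.isChain_iff_pairwise.1 h)).1 ℓ' h'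

variable (cov lab lt) in
def IsELChain (x y : α) (c : List α) : Prop :=
  (IsSatChain cov x y c ∧ IncWord lt (wordOf lab c)) ∧
    ∀ c', IsSatChain cov x y c' → c' ≠ c →
      ¬ IncWord lt (wordOf lab c') ∧ List.Lex lt (wordOf lab c) (wordOf lab c')

/-- The first step `x ⋖ z` of the increasing chain of `[x, y]`; the elements of the interval are
given by a relation `le` containing `leOf cov`. -/
structure IsFirstStep (cov : α → α → Prop) (lab : α → α → L) (lt : L → L → Prop)
    (le : α → α → Prop) (x y z : α) : Prop where
  covers : cov x z
  below : le z y
  lab_lt_of_ne : ∀ w, cov x w → le w y → w ≠ z → lt (lab x z) (lab x w)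
  lab_lt_lab_next : ∀ w, cov z w → le w y → lt (lab x z) (lab z w)
  not_incWord_of_ne : ∀ w rest, cov x w → w ≠ z → IsSatChain cov w y (w :: rest) →
    ¬ IncWord lt (wordOf lab (x :: w :: rest))

theorem isELChain_singleton (rk : α → ℕ) (hrk : ∀ x z, cov x z → rk z < rk x) :
    IsELChain cov lab lt x x [x] := by
  refine ⟨⟨isSatChain_singleton_iff.2 rfl, List.isChain_nil⟩, fun c' hc' hne => ?_⟩
  obtain ⟨_ | ⟨w, rest⟩, rfl⟩ := hc'.exists_eq_cons
  · exact absurd rfl hne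
  · obtain ⟨hcov, htail⟩ := isSatChain_cons_cons_iff.1 hc'
    exact absurd (rk_le_of_leOf rk hrk htail.leOf) (hrk _ _ hcov).not_ge

theorem IsFirstStep.isELChain_cons {le : α → α → Prop} {c : List α}
    (rk : α → ℕ) (hrk : ∀ x z, cov x z → rk z < rk x) (hle : ∀ w, leOf cov w y → le w y)
    (h : IsFirstStep cov lab lt le x y z) (hc : IsELChain cov lab lt z y c) :
    IsELChain cov lab lt x y (x :: c) := by
  obtain ⟨⟨hsat, hinc⟩, hmin⟩ := hc
  obtain ⟨tail, rfl⟩ := hsat.exists_eq_cons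
  refine ⟨⟨isSatChain_cons_cons_iff.2 ⟨h.covers, hsat⟩, ?_⟩, fun c' hc' hne => ?_⟩
  · cases tail with
    | nil => exact List.isChain_singleton _
    | cons z₁ rest =>
      obtain ⟨hcov, hsat₁⟩ := isSatChain_cons_cons_iff.1 hsat
      exact List.isChain_cons_cons.2 ⟨h.lab_lt_lab_next z₁ hcov (hle _ hsat₁.leOf), hinc⟩
  obtain ⟨_ | ⟨w, rest⟩, rfl⟩ := hc'.exists_eq_cons
  · have hxy := isSatChain_singleton_iff.1 hc'
    subst hxy
    exact absurd (rk_le_of_leOf rk hrk hsat.leOf) (hrk _ _ h.covers).not_ge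
  obtain ⟨hcov, hsatw⟩ := isSatChain_cons_cons_iff.1 hc'
  by_cases hwz : w = z
  · subst hwz
    obtain ⟨hninc, hlex⟩ := hmin _ hsatw fun h' => hne (by rw [h'])
    exact ⟨fun hinc' => hninc hinc'.tail, List.Lex.cons hlex⟩
  · exact ⟨h.not_incWord_of_ne w rest hcov hwz hsatw,
      List.Lex.rel (h.lab_lt_of_ne w hcov (hle _ hsatw.leOf) hwz)⟩

theorem isELLabeling_of_exists_isFirstStep (le : α → α → Prop) (rk : α → ℕ)
    (hrk : ∀ x z, cov x z → rk z < rk x) (hle : ∀ x y, leOf cov x y → le x y)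
    (h : ∀ x y, le x y → x ≠ y → ∃ z, IsFirstStep cov lab lt le x y z) :
    IsELLabeling cov lab lt := by
  suffices ∀ n x y, rk x = n → le x y → ∃ c, IsELChain cov lab lt x y c from
    fun x y hxy => this _ x y rfl (hle x y hxy)
  intro n
  induction n using Nat.strong_induction_on with
  | _ n ih =>
    rintro x y rfl hxy
    by_cases hne : x = y
    · exact hne ▸ ⟨[x], isELChain_singleton rk hrk⟩
    obtain ⟨z, hz⟩ := h x y hxy hne
    obtain ⟨c, hc⟩ := ih _ (hrk _ _ hz.covers) z y rfl hz.below
    exact ⟨x :: c, hz.isELChain_cons rk hrk (hle · y) hc⟩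

end LabeledPosets

instance : IsTrans (ℕ × ℕ × Bool) ltLw := ⟨by
  rintro ⟨a₁, b₁, u₁⟩ ⟨a₂, b₂, u₂⟩ ⟨a₃, b₃, u₃⟩ h h'
  simp only [ltLw, ne_eq, Prod.mk.injEq] at *
  cases u₁ <;> cases u₂ <;> cases u₃ <;> grind⟩

theorem ltLw.fst_le {ℓ ℓ' : ℕ × ℕ × Bool} (h : ltLw ℓ ℓ') : ℓ.1 ≤ ℓ'.1 := by
  rcases h with h | h
  exacts [h.le, h.1.le]

theorem ltLw.snd_le_of_fst_eq {ℓ ℓ' : ℕ × ℕ × Bool} (h : ltLw ℓ ℓ') (h₁ : ℓ.1 = ℓ'.1) :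
    ℓ.2.1 ≤ ℓ'.2.1 ∧ ℓ.2.2 ≤ ℓ'.2.2 := by
  rcases h with h | h
  exacts [absurd h₁ h.ne, ⟨h.2.1, h.2.2.1⟩]

theorem ltLw_or_eq_of_le {a a' b b' : ℕ} {u u' : Bool} (ha : a ≤ a')
    (h : a = a' → b ≤ b' ∧ u ≤ u') : ltLw (a, b, u) (a', b', u') ∨ (a, b, u) = (a', b', u') := by
  rcases ha.lt_or_eq with ha | rfl
  · exact Or.inl (Or.inl ha)
  by_cases heq : (b, u) = (b', u')
  · exact Or.inr (by rw [heq])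
  · exact Or.inl (Or.inr ⟨rfl, (h rfl).1, (h rfl).2, heq⟩)

theorem minB_eq_min' {s : Finset ℕ} (h : s.Nonempty) : minB s = s.min' h := by
  rw [minB, ← Finset.coe_min' h, WithTop.untopD_coe]

theorem minB_mem {s : Finset ℕ} (h : s.Nonempty) : minB s ∈ s :=
  minB_eq_min' h ▸ s.min'_mem h

theorem minB_le {s : Finset ℕ} {a : ℕ} (h : a ∈ s) : minB s ≤ a :=
  minB_eq_min' ⟨a, h⟩ ▸ s.min'_le a h
namespace PPart

variable {A : Finset ℕ}

def Together (π : PPart A) (i j : ℕ) : Prop := ∃ b ∈ π.1, i ∈ b.1 ∧ j ∈ b.1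

noncomputable def blockOf (π : PPart A) (i : ℕ) : Finset ℕ × ℕ :=
  if h : ∃ b ∈ π.1, i ∈ b.1 then h.choose else (∅, 0)

variable {π π' x y z v w : PPart A} {b b' B : Finset ℕ × ℕ} {i j k e t a a₂ : ℕ}

theorem snd_mem (hb : b ∈ π.1) : b.2 ∈ b.1 := π.2.1 b hb

theorem eq_of_mem_of_mem (hb : b ∈ π.1) (hb' : b' ∈ π.1) (hi : i ∈ b.1) (hi' : i ∈ b'.1) :
    b = b' := by
  by_contra hne
  exact Finset.disjoint_left.1 (π.2.2.1 b hb b' hb' hne) hi hi'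

theorem subset_of_mem (hb : b ∈ π.1) : b.1 ⊆ A := fun _ hi =>
  π.2.2.2 ▸ Finset.mem_biUnion.2 ⟨b, hb, hi⟩

theorem exists_mem (hi : i ∈ A) : ∃ b ∈ π.1, i ∈ b.1 := by
  rw [← π.2.2.2] at hi
  simpa using Finset.mem_biUnion.1 hi

theorem snd_ne_snd (hb : b ∈ π.1) (hb' : b' ∈ π.1) (hne : b ≠ b') : b.2 ≠ b'.2 :=
  fun h => hne (eq_of_mem_of_mem hb hb' (snd_mem hb) (h ▸ snd_mem hb'))

theorem minB_mem (hb : b ∈ π.1) : minB b.1 ∈ b.1 := _root_.minB_mem ⟨_, snd_mem hb⟩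

theorem blockOf_mem (hi : i ∈ A) : π.blockOf i ∈ π.1 := by
  rw [blockOf, dif_pos (exists_mem hi)]
  exact (exists_mem hi).choose_spec.1

theorem mem_blockOf (hi : i ∈ A) : i ∈ (π.blockOf i).1 := by
  rw [blockOf, dif_pos (exists_mem hi)]
  exact (exists_mem hi).choose_spec.2

theorem eq_blockOf (hb : b ∈ π.1) (hi : i ∈ b.1) : b = π.blockOf i :=
  eq_of_mem_of_mem hb (blockOf_mem (subset_of_mem hb hi)) hi
    (mem_blockOf (subset_of_mem hb hi))

theorem together_iff_mem (hb : b ∈ π.1) (hi : i ∈ b.1) : π.Together i j ↔ j ∈ b.1 :=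
  ⟨fun ⟨_, hb', hi', hj⟩ => eq_of_mem_of_mem hb' hb hi' hi ▸ hj, fun hj => ⟨b, hb, hi, hj⟩⟩

theorem Together.mem_left (h : π.Together i j) : i ∈ A :=
  have ⟨_, hb, hi, _⟩ := h
  subset_of_mem hb hi

theorem Together.symm (h : π.Together i j) : π.Together j i :=
  have ⟨b, hb, hi, hj⟩ := h
  ⟨b, hb, hj, hi⟩

theorem Together.trans (h : π.Together i j) (h' : π.Together j k) : π.Together i k :=
  have ⟨b, hb, hi, hj⟩ := h
  ⟨b, hb, hi, (together_iff_mem hb hj).1 h'⟩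

theorem together_self (hi : i ∈ A) : π.Together i i :=
  ⟨_, blockOf_mem hi, mem_blockOf hi, mem_blockOf hi⟩

/-- The order of `Πₙ•`. -/
structure Refines (x y : PPart A) : Prop where
  together : ∀ i j, x.Together i j → y.Together i j
  snd_eq : ∀ B ∈ y.1, ∀ b ∈ x.1, B.2 ∈ b.1 → b.2 = B.2

theorem Refines.refl (x : PPart A) : Refines x x :=
  ⟨fun _ _ => id, fun _ hB _ hb hmem =>
    congrArg Prod.snd (eq_of_mem_of_mem hb hB hmem (snd_mem hB))⟩

theorem Refines.trans (hxy : Refines x y) (hyz : Refines y z) : Refines x z := by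
  refine ⟨fun i j h => hyz.together i j (hxy.together i j h), fun C hC b hb hmem => ?_⟩
  have hA : C.2 ∈ A := subset_of_mem hb hmem
  have hyC : (y.blockOf C.2).2 = C.2 := hyz.snd_eq C hC _ (blockOf_mem hA) (mem_blockOf hA)
  rw [← hyC]
  exact hxy.snd_eq _ (blockOf_mem hA) b hb (by rwa [hyC])

theorem Refines.eq_of_together (hxy : Refines x y)
    (h : ∀ i j, y.Together i j → x.Together i j) : x = y := by
  have hyx : y.1 ⊆ x.1 := by
    intro B hB
    have hA : B.2 ∈ A := subset_of_mem hB (snd_mem hB)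
    have hb := blockOf_mem (π := x) hA
    have hfst : (x.blockOf B.2).1 = B.1 := by
      ext t
      rw [← together_iff_mem hb (mem_blockOf hA), ← together_iff_mem hB (snd_mem hB)]
      exact ⟨hxy.together _ _, h _ _⟩
    have hsnd := hxy.snd_eq B hB _ hb (mem_blockOf hA)
    exact (Prod.ext hfst hsnd) ▸ hb
  refine Subtype.ext (Finset.Subset.antisymm (fun b hb => ?_) hyx)
  have hA : b.2 ∈ A := subset_of_mem hb (snd_mem hb)
  have hB := blockOf_mem (π := y) hA
  exact eq_of_mem_of_mem (hyx hB) hb (mem_blockOf hA) (snd_mem hb) ▸ hB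

theorem Refines.blockOf_subset (hxv : Refines x v) (hi : i ∈ A) :
    (x.blockOf i).1 ⊆ (v.blockOf i).1 := fun _ ht =>
  (together_iff_mem (blockOf_mem hi) (mem_blockOf hi)).1
    (hxv.together _ _ ⟨_, blockOf_mem hi, mem_blockOf hi, ht⟩)

theorem exists_merge {b₁ b₂ : Finset ℕ × ℕ} {p : ℕ} (hb₁ : b₁ ∈ π.1) (hb₂ : b₂ ∈ π.1)
    (hne : b₁ ≠ b₂) (hp : p = b₁.2 ∨ p = b₂.2) :
    ∃ π' : PPart A, π'.1 = insert (b₁.1 ∪ b₂.1, p) ((π.1.erase b₁).erase b₂) := by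
  set R := (π.1.erase b₁).erase b₂
  have hR : ∀ b ∈ R, b ∈ π.1 ∧ b ≠ b₁ ∧ b ≠ b₂ := fun b hb => by
    simp only [R, Finset.mem_erase] at hb
    exact ⟨hb.2.2, hb.2.1, hb.1⟩
  have hdisj : ∀ b ∈ R, Disjoint (b₁.1 ∪ b₂.1) b.1 := fun b hb =>
    Finset.disjoint_union_left.2 ⟨π.2.2.1 _ hb₁ _ (hR b hb).1 (hR b hb).2.1.symm,
      π.2.2.1 _ hb₂ _ (hR b hb).1 (hR b hb).2.2.symm⟩
  have hπ : π.1 = insert b₁ (insert b₂ R) := by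
    rw [Finset.insert_erase (Finset.mem_erase.2 ⟨hne.symm, hb₂⟩), Finset.insert_erase hb₁]
  refine ⟨⟨insert (b₁.1 ∪ b₂.1, p) R, ?_, ?_, ?_⟩, rfl⟩
  · simp only [Finset.mem_insert, forall_eq_or_imp]
    refine ⟨?_, fun b hb => snd_mem (hR b hb).1⟩
    rcases hp with rfl | rfl
    exacts [Finset.mem_union_left _ (snd_mem hb₁), Finset.mem_union_right _ (snd_mem hb₂)]
  · simp only [Finset.mem_insert, forall_eq_or_imp]
    refine ⟨⟨fun h => absurd rfl h, fun b hb _ => hdisj b hb⟩, fun b hb =>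
      ⟨fun _ => (hdisj b hb).symm, fun b' hb' hne' => π.2.2.1 _ (hR b hb).1 _ (hR b' hb').1 hne'⟩⟩
  · have hA := π.2.2.2
    rw [hπ, Finset.biUnion_insert, Finset.biUnion_insert] at hA
    rw [Finset.biUnion_insert, ← hA, Finset.union_assoc]

structure MergeStep (π π' : PPart A) where
  b₁ : Finset ℕ × ℕ
  b₂ : Finset ℕ × ℕ
  p : ℕ
  hb₁ : b₁ ∈ π.1
  hb₂ : b₂ ∈ π.1
  minB_lt : minB b₁.1 < minB b₂.1
  hp : p = b₁.2 ∨ p = b₂.2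
  eq : π'.1 = insert (b₁.1 ∪ b₂.1, p) ((π.1.erase b₁).erase b₂)

theorem nonempty_mergeStep (h : covPP π π') : Nonempty (MergeStep π π') :=
  have ⟨b₁, hb₁, b₂, hb₂, hlt, p, hp, heq⟩ := h
  ⟨⟨b₁, b₂, p, hb₁, hb₂, hlt, hp, heq⟩⟩

namespace MergeStep

noncomputable def ofCovPP (h : covPP π π') : MergeStep π π' := (nonempty_mergeStep h).some

variable (d : MergeStep π π')

theorem covPP (d : MergeStep π π') : covPP π π' :=
  ⟨d.b₁, d.hb₁, d.b₂, d.hb₂, d.minB_lt, d.p, d.hp, d.eq⟩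

def block : Finset ℕ × ℕ := (d.b₁.1 ∪ d.b₂.1, d.p)

theorem b₁_ne_b₂ : d.b₁ ≠ d.b₂ := fun h => d.minB_lt.ne (h ▸ rfl)

theorem mem_iff : b ∈ π'.1 ↔ b = d.block ∨ (b ∈ π.1 ∧ b ≠ d.b₁ ∧ b ≠ d.b₂) := by
  rw [d.eq]
  simp only [Finset.mem_insert, Finset.mem_erase, block]
  tauto

theorem block_mem : d.block ∈ π'.1 := d.mem_iff.2 (Or.inl rfl)

theorem mem_of_ne (hb : b ∈ π.1) (h₁ : b ≠ d.b₁) (h₂ : b ≠ d.b₂) : b ∈ π'.1 :=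
  d.mem_iff.2 (Or.inr ⟨hb, h₁, h₂⟩)

theorem block_not_mem : d.block ∉ π.1 := fun h => by
  have h₁ : d.block = d.b₁ :=
    eq_of_mem_of_mem h d.hb₁ (Finset.mem_union_left _ (snd_mem d.hb₁)) (snd_mem d.hb₁)
  have h₂ : d.block = d.b₂ :=
    eq_of_mem_of_mem h d.hb₂ (Finset.mem_union_right _ (snd_mem d.hb₂)) (snd_mem d.hb₂)
  exact d.b₁_ne_b₂ (h₁.symm.trans h₂)

theorem card_eq (d : MergeStep π π') : π.1.card = π'.1.card + 1 := by
  have h₂ : d.b₂ ∈ π.1.erase d.b₁ := Finset.mem_erase.2 ⟨d.b₁_ne_b₂.symm, d.hb₂⟩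
  have hnot : (d.b₁.1 ∪ d.b₂.1, d.p) ∉ (π.1.erase d.b₁).erase d.b₂ := fun h =>
    d.block_not_mem (Finset.mem_of_mem_erase (Finset.mem_of_mem_erase h))
  rw [d.eq, Finset.card_insert_of_notMem hnot, Finset.card_erase_of_mem h₂,
    Finset.card_erase_of_mem d.hb₁]
  have : 2 ≤ π.1.card := Finset.one_lt_card.2 ⟨_, d.hb₁, _, d.hb₂, d.b₁_ne_b₂⟩
  omega

theorem sdiff_eq_pair : π.1 \ π'.1 = {d.b₁, d.b₂} := by
  ext b
  simp only [Finset.mem_sdiff, d.mem_iff, Finset.mem_insert, Finset.mem_singleton]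
  constructor
  · rintro ⟨hb, hb'⟩
    by_contra h
    rw [not_or] at h
    exact hb' (Or.inr ⟨hb, h⟩)
  · rintro (rfl | rfl)
    · exact ⟨d.hb₁, by rintro (h | ⟨-, h, -⟩); exacts [d.block_not_mem (h ▸ d.hb₁), h rfl]⟩
    · exact ⟨d.hb₂, by rintro (h | ⟨-, -, h⟩); exacts [d.block_not_mem (h ▸ d.hb₂), h rfl]⟩

theorem sdiff_eq_singleton : π'.1 \ π.1 = {d.block} := by
  ext b
  simp only [Finset.mem_sdiff, d.mem_iff, Finset.mem_singleton]
  constructor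
  · rintro ⟨h | h, hb⟩
    exacts [h, absurd h.1 hb]
  · rintro rfl
    exact ⟨Or.inl rfl, d.block_not_mem⟩

theorem labPP_eq : labPP π π' = (minB d.b₁.1, minB d.b₂.1, decide (d.p = d.b₁.2)) := by
  have hmin : ({minB d.b₁.1, minB d.b₂.1} : Finset ℕ).min = (minB d.b₁.1 : WithTop ℕ) := by
    rw [Finset.min_insert, Finset.min_singleton]
    exact min_eq_left (by exact_mod_cast d.minB_lt.le)
  have hmax : ({minB d.b₁.1, minB d.b₂.1} : Finset ℕ).max = (minB d.b₂.1 : WithBot ℕ) := by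
    rw [Finset.max_insert, Finset.max_singleton]
    exact max_eq_right (by exact_mod_cast d.minB_lt.le)
  have huntop : (minB d.b₁.1 : WithTop ℕ).untopD 0 = minB d.b₁.1 := rfl
  have hunbot : (minB d.b₂.1 : WithBot ℕ).unbotD 0 = minB d.b₂.1 := rfl
  simp only [labPP, d.sdiff_eq_pair, d.sdiff_eq_singleton, Finset.image_insert,
    Finset.image_singleton, hmin, hmax, huntop, hunbot]
  simp [block, d.minB_lt.ne']

theorem together_iff : π'.Together i j ↔ π.Together i j ∨ (i ∈ d.block.1 ∧ j ∈ d.block.1) := by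
  constructor
  · rintro ⟨b, hb, hi, hj⟩
    rcases d.mem_iff.1 hb with rfl | ⟨hb, -⟩
    exacts [Or.inr ⟨hi, hj⟩, Or.inl ⟨b, hb, hi, hj⟩]
  · rintro (⟨b, hb, hi, hj⟩ | ⟨hi, hj⟩)
    · by_cases h₁ : b = d.b₁
      · subst h₁
        exact ⟨_, d.block_mem, Finset.mem_union_left _ hi, Finset.mem_union_left _ hj⟩
      by_cases h₂ : b = d.b₂
      · subst h₂
        exact ⟨_, d.block_mem, Finset.mem_union_right _ hi, Finset.mem_union_right _ hj⟩
      exact ⟨b, d.mem_of_ne hb h₁ h₂, hi, hj⟩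
    · exact ⟨_, d.block_mem, hi, hj⟩

theorem refines (d : MergeStep π π') : Refines π π' := by
  refine ⟨fun i j h => d.together_iff.2 (Or.inl h), fun C hC b hb hmem => ?_⟩
  rcases d.mem_iff.1 hC with rfl | ⟨hC, -⟩
  · have hbk : ∀ {b'}, b' ∈ π.1 → d.p = b'.2 → b = b' := fun {b'} hb' hp =>
      eq_of_mem_of_mem hb hb' hmem (show d.p ∈ b'.1 from hp ▸ snd_mem hb')
    rcases d.hp with hp | hp
    · rw [hbk d.hb₁ hp]; exact hp.symm
    · rw [hbk d.hb₂ hp]; exact hp.symm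
  · exact congrArg Prod.snd (eq_of_mem_of_mem hb hC hmem (snd_mem hC))

theorem blockOf_eq_block (hi : i ∈ d.block.1) : π'.blockOf i = d.block :=
  (eq_blockOf d.block_mem hi).symm

theorem blockOf_eq_of_not_mem (hiA : i ∈ A) (hi : i ∉ d.block.1) : π'.blockOf i = π.blockOf i := by
  have hb := blockOf_mem (π := π) hiA
  have hmem := mem_blockOf (π := π) hiA
  refine (eq_blockOf (d.mem_of_ne hb ?_ ?_) hmem).symm <;> rintro h <;> rw [h] at hmem
  exacts [hi (Finset.mem_union_left _ hmem), hi (Finset.mem_union_right _ hmem)]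

theorem minB_b₁_eq (hy : Refines π' y) (he : ∀ k, y.Together e k → e ≤ k)
    (hem : e ∈ d.block.1) : minB d.b₁.1 = e := by
  have hle : ∀ t ∈ d.block.1, e ≤ t := fun t ht =>
    he t (hy.together _ _ ⟨_, d.block_mem, hem, ht⟩)
  have he₁ : e ∈ d.b₁.1 := by
    rcases Finset.mem_union.1 hem with h | h
    · exact h
    · have := hle _ (Finset.mem_union_left _ (minB_mem d.hb₁))
      have := minB_le h
      have := d.minB_lt
      omega
  exact le_antisymm (minB_le he₁) (hle _ (Finset.mem_union_left _ (minB_mem d.hb₁)))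

theorem p_eq_of_mem (hπy : Refines π y) (hy : Refines π' y) (hB : B ∈ y.1)
    (h : B.2 ∈ d.b₁.1) : d.p = d.b₁.2 :=
  (hy.snd_eq B hB _ d.block_mem (Finset.mem_union_left _ h)).trans
    (hπy.snd_eq B hB _ d.hb₁ h).symm

theorem refines_of_subset (hπy : Refines π y) (hB : B ∈ y.1) (hsub : d.block.1 ⊆ B.1)
    (hp : B.2 ∈ d.block.1 → d.p = B.2) : Refines π' y := by
  refine ⟨fun i j h => ?_, fun C hC b hb hmem => ?_⟩
  · rcases d.together_iff.1 h with h | ⟨hi, hj⟩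
    exacts [hπy.together i j h, ⟨B, hB, hsub hi, hsub hj⟩]
  rcases d.mem_iff.1 hb with rfl | ⟨hb, -⟩
  · obtain rfl := eq_of_mem_of_mem hC hB (snd_mem hC) (hsub hmem)
    exact hp hmem
  · exact hπy.snd_eq C hC b hb hmem

theorem not_together_minB : ¬ π.Together (minB d.b₁.1) (minB d.b₂.1) := fun h =>
  d.b₁_ne_b₂ (eq_of_mem_of_mem d.hb₁ d.hb₂ ((together_iff_mem d.hb₁ (minB_mem d.hb₁)).1 h)
    (minB_mem d.hb₂))

end MergeStep

theorem together_labPP (h : covPP π π') :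
    π'.Together (labPP π π').1 (labPP π π').2.1 := by
  have d := MergeStep.ofCovPP h
  rw [d.labPP_eq]
  exact ⟨_, d.block_mem, Finset.mem_union_left _ (minB_mem d.hb₁),
    Finset.mem_union_right _ (minB_mem d.hb₂)⟩

theorem not_together_labPP (h : covPP π π') :
    ¬ π.Together (labPP π π').1 (labPP π π').2.1 := by
  have d := MergeStep.ofCovPP h
  rw [d.labPP_eq]
  exact d.not_together_minB

theorem labPP_injective {w' : PPart A} (h : covPP π w) (h' : covPP π w')
    (heq : labPP π w = labPP π w') : w = w' := by
  have d := MergeStep.ofCovPP h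
  have d' := MergeStep.ofCovPP h'
  rw [d.labPP_eq, d'.labPP_eq, Prod.mk.injEq, Prod.mk.injEq] at heq
  obtain ⟨h₁, h₂, hp⟩ := heq
  have hb₁ : d.b₁ = d'.b₁ :=
    eq_of_mem_of_mem d.hb₁ d'.hb₁ (minB_mem d.hb₁) (h₁ ▸ minB_mem d'.hb₁)
  have hb₂ : d.b₂ = d'.b₂ :=
    eq_of_mem_of_mem d.hb₂ d'.hb₂ (minB_mem d.hb₂) (h₂ ▸ minB_mem d'.hb₂)
  have hp' : d.p = d'.p := by
    by_cases hq : d.p = d.b₁.2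
    · have hq' : d'.p = d'.b₁.2 := by simpa [hq] using hp
      rw [hq, hq', hb₁]
    · have hq' : d'.p ≠ d'.b₁.2 := by simpa [hq] using hp
      rw [d.hp.resolve_left hq, d'.hp.resolve_left hq', hb₂]
  apply Subtype.ext
  rw [d.eq, d'.eq, hb₁, hb₂, hp']

theorem Refines.of_leOf (h : leOf covPP x y) : Refines x y := by
  induction h using Relation.ReflTransGen.head_induction_on with
  | refl => exact .refl _
  | head hcov _ ih => exact (MergeStep.ofCovPP hcov).refines.trans ih

theorem exists_labPP_of_not_together (he : ∀ k, y.Together e k → e ≤ k) (ht : y.Together e t) :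
    ∀ {z : PPart A} (rest : List (PPart A)), IsSatChain covPP z y (z :: rest) →
      ¬ z.Together e t → ∃ ℓ ∈ wordOf labPP (z :: rest), ℓ.1 = e ∧ ℓ.2.1 ≤ t
  | _, [], hsat, hzt => absurd (isSatChain_singleton_iff.1 hsat ▸ ht) hzt
  | z, w :: rest, hsat, hzt => by
    obtain ⟨hcov, htail⟩ := isSatChain_cons_cons_iff.1 hsat
    by_cases hwt : w.Together e t
    · have d := MergeStep.ofCovPP hcov
      obtain ⟨he', ht'⟩ := (d.together_iff.1 hwt).resolve_left hzt
      have h₁ := d.minB_b₁_eq (Refines.of_leOf htail.leOf) he he'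
      have ht₂ : t ∈ d.b₂.1 := (Finset.mem_union.1 ht').resolve_left fun ht₁ =>
        hzt ⟨_, d.hb₁, h₁ ▸ minB_mem d.hb₁, ht₁⟩
      refine ⟨labPP z w, List.mem_cons_self, ?_⟩
      rw [d.labPP_eq]
      exact ⟨h₁, minB_le ht₂⟩
    · obtain ⟨ℓ, hℓ, hℓ'⟩ := exists_labPP_of_not_together he ht rest htail hwt
      exact ⟨ℓ, List.mem_cons_of_mem _ hℓ, hℓ'⟩

theorem blockOf_snd_eq_of_forall_labPP (heA : e ∈ A) (he : ∀ k, y.Together e k → e ≤ k) :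
    ∀ {z : PPart A} (rest : List (PPart A)), IsSatChain covPP z y (z :: rest) →
      (∀ ℓ ∈ wordOf labPP (z :: rest), ℓ.1 = e → ℓ.2.2 = true) →
      (z.blockOf e).2 = (y.blockOf e).2
  | _, [], hsat, _ => by rw [isSatChain_singleton_iff.1 hsat]
  | z, w :: rest, hsat, hlab => by
    obtain ⟨hcov, htail⟩ := isSatChain_cons_cons_iff.1 hsat
    have d := MergeStep.ofCovPP hcov
    rw [← blockOf_snd_eq_of_forall_labPP heA he rest htail fun ℓ hℓ =>
      hlab ℓ (List.mem_cons_of_mem _ hℓ)]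
    by_cases hem : e ∈ d.block.1
    · have h₁ := d.minB_b₁_eq (Refines.of_leOf htail.leOf) he hem
      have hp := hlab _ List.mem_cons_self (by rw [d.labPP_eq]; exact h₁)
      rw [d.labPP_eq, decide_eq_true_iff] at hp
      rw [d.blockOf_eq_block hem, ← eq_blockOf d.hb₁ (h₁ ▸ minB_mem d.hb₁)]
      exact hp.symm
    · rw [d.blockOf_eq_of_not_mem heA hem]

structure IsFirstSplit (x y : PPart A) (a a₂ : ℕ) : Prop where
  refines : Refines x y
  together : y.Together a a₂
  not_together : ¬ x.Together a a₂
  fst_le : ∀ i j, y.Together i j → ¬ x.Together i j → a ≤ i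
  snd_le : ∀ j, y.Together a j → ¬ x.Together a j → a₂ ≤ j

def KeepsPoint (x y : PPart A) (a : ℕ) : Prop := (y.blockOf a).2 ∈ (x.blockOf a).1

theorem exists_isFirstSplit (hxy : Refines x y) (hne : x ≠ y) :
    ∃ a a₂, IsFirstSplit x y a a₂ := by
  have h : ∃ i j, y.Together i j ∧ ¬ x.Together i j := by
    by_contra h'
    simp only [not_exists, not_and, not_not] at h'
    exact hne (hxy.eq_of_together h')
  have h₂ := Nat.find_spec h
  exact ⟨_, _, hxy, (Nat.find_spec h₂).1, (Nat.find_spec h₂).2,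
    fun i j hy hx => Nat.find_min' h ⟨j, hy, hx⟩, fun j hy hx => Nat.find_min' h₂ ⟨hy, hx⟩⟩

namespace IsFirstSplit

theorem mem (s : IsFirstSplit x y a a₂) : a ∈ A := s.together.mem_left

theorem le_of_together (s : IsFirstSplit x y a a₂) (ht : y.Together a t) : a ≤ t := by
  by_cases hx : x.Together a t
  · exact s.fst_le t a₂ (ht.symm.trans s.together) fun h => s.not_together (hx.trans h)
  · exact s.fst_le t a ht.symm fun h => hx h.symm

theorem lt (s : IsFirstSplit x y a a₂) : a < a₂ :=
  (s.le_of_together s.together).lt_of_ne fun h => s.not_together (h ▸ together_self s.mem)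

theorem minB_blockOf_fst (s : IsFirstSplit x y a a₂) : minB (x.blockOf a).1 = a :=
  le_antisymm (minB_le (mem_blockOf s.mem)) (s.le_of_together (s.refines.together _ _
    ⟨_, blockOf_mem s.mem, mem_blockOf s.mem, minB_mem (blockOf_mem s.mem)⟩))

theorem minB_blockOf_snd (s : IsFirstSplit x y a a₂) : minB (x.blockOf a₂).1 = a₂ := by
  have ha₂ : a₂ ∈ A := s.together.symm.mem_left
  have hx : x.Together a₂ (minB (x.blockOf a₂).1) :=
    ⟨_, blockOf_mem ha₂, mem_blockOf ha₂, minB_mem (blockOf_mem ha₂)⟩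
  exact le_antisymm (minB_le (mem_blockOf ha₂)) (s.snd_le _
    (s.together.trans (s.refines.together _ _ hx)) fun h => s.not_together (h.trans hx.symm))

theorem le_minB (s : IsFirstSplit x y a a₂) (hxv : Refines x v) (d : MergeStep v w)
    (hwy : Refines w y) :
    a ≤ minB d.b₁.1 ∧ (minB d.b₁.1 = a → a₂ ≤ minB d.b₂.1) := by
  have hy : y.Together (minB d.b₁.1) (minB d.b₂.1) := hwy.together _ _
    ⟨_, d.block_mem, Finset.mem_union_left _ (minB_mem d.hb₁),
      Finset.mem_union_right _ (minB_mem d.hb₂)⟩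
  have hx : ¬ x.Together (minB d.b₁.1) (minB d.b₂.1) := fun h =>
    d.not_together_minB (hxv.together _ _ h)
  exact ⟨s.fst_le _ _ hy hx, fun h => s.snd_le _ (h ▸ hy) (h ▸ hx)⟩

theorem p_eq_of_keepsPoint (s : IsFirstSplit x y a a₂) (hxv : Refines x v) (hvy : Refines v y)
    (d : MergeStep v w) (hwy : Refines w y) (h₁ : minB d.b₁.1 = a) (hk : KeepsPoint x y a) :
    d.p = d.b₁.2 := by
  have hsub := hxv.blockOf_subset s.mem hk
  rw [← eq_blockOf d.hb₁ (h₁ ▸ minB_mem d.hb₁)] at hsub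
  exact d.p_eq_of_mem hvy hwy (blockOf_mem s.mem) hsub

theorem le_labPP (s : IsFirstSplit x y a a₂) (hxv : Refines x v) (hvy : Refines v y)
    (d : MergeStep v w) (hwy : Refines w y) :
    ltLw (a, a₂, decide (KeepsPoint x y a)) (labPP v w) ∨
      (a, a₂, decide (KeepsPoint x y a)) = labPP v w := by
  obtain ⟨h₁, h₂⟩ := s.le_minB hxv d hwy
  rw [d.labPP_eq]
  refine ltLw_or_eq_of_le h₁ fun h => ⟨h₂ h.symm, ?_⟩
  by_cases hk : KeepsPoint x y a
  · simp [hk, s.p_eq_of_keepsPoint hxv hvy d hwy h.symm hk]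
  · simp [hk]

theorem exists_covPP (s : IsFirstSplit x y a a₂) :
    ∃ z, covPP x z ∧ Refines z y ∧ labPP x z = (a, a₂, decide (KeepsPoint x y a)) := by
  have ha₂ : a₂ ∈ A := s.together.symm.mem_left
  have hb₁ := blockOf_mem (π := x) s.mem
  have hb₂ := blockOf_mem (π := x) ha₂
  have hB := blockOf_mem (π := y) s.mem
  have hne : x.blockOf a ≠ x.blockOf a₂ := fun h =>
    s.not_together ⟨_, hb₁, mem_blockOf s.mem, h ▸ mem_blockOf ha₂⟩
  have hp : (if KeepsPoint x y a then (x.blockOf a).2 else (x.blockOf a₂).2) = (x.blockOf a).2 ∨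
      (if KeepsPoint x y a then (x.blockOf a).2 else (x.blockOf a₂).2) = (x.blockOf a₂).2 := by
    split_ifs <;> simp
  obtain ⟨z, hz⟩ := exists_merge hb₁ hb₂ hne hp
  let d : MergeStep x z := ⟨_, _, _, hb₁, hb₂,
    s.minB_blockOf_fst.symm ▸ s.minB_blockOf_snd.symm ▸ s.lt, hp, hz⟩
  have hyB : y.blockOf a₂ = y.blockOf a :=
    (eq_blockOf hB ((together_iff_mem hB (mem_blockOf s.mem)).1 s.together)).symm
  have hsub : d.block.1 ⊆ (y.blockOf a).1 := Finset.union_subset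
    (s.refines.blockOf_subset s.mem) (hyB ▸ s.refines.blockOf_subset ha₂)
  refine ⟨z, d.covPP, d.refines_of_subset s.refines hB hsub fun hmem => ?_, ?_⟩
  · by_cases hk : KeepsPoint x y a
    · simpa [d, hk] using s.refines.snd_eq _ hB _ hb₁ hk
    · have hmem₂ : (y.blockOf a).2 ∈ (x.blockOf a₂).1 :=
        (Finset.mem_union.1 hmem).resolve_left hk
      simpa [d, hk] using s.refines.snd_eq _ hB _ hb₂ hmem₂
  · rw [d.labPP_eq]
    by_cases hk : KeepsPoint x y a
    · simp [d, hk, s.minB_blockOf_fst, s.minB_blockOf_snd]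
    · simp [d, hk, s.minB_blockOf_fst, s.minB_blockOf_snd, snd_ne_snd hb₂ hb₁ hne.symm]

theorem minB_eq_of_together (s : IsFirstSplit x y a a₂) (d : MergeStep x w) (hwy : Refines w y)
    (h : w.Together a a₂) : minB d.b₁.1 = a ∧ minB d.b₂.1 = a₂ := by
  obtain ⟨ha, ha₂⟩ := (d.together_iff.1 h).resolve_left s.not_together
  have h₁ := d.minB_b₁_eq hwy (fun _ => s.le_of_together) ha
  have hb₂ : a₂ ∈ d.b₂.1 := (Finset.mem_union.1 ha₂).resolve_left fun hb₁ =>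
    s.not_together ⟨_, d.hb₁, h₁ ▸ minB_mem d.hb₁, hb₁⟩
  exact ⟨h₁, le_antisymm (minB_le hb₂) ((s.le_minB (.refl x) d hwy).2 h₁)⟩

theorem together_of_forall_lt (s : IsFirstSplit x y a a₂) (hw : covPP x w)
    {rest : List (PPart A)} (hsat : IsSatChain covPP w y (w :: rest))
    (hafter : ∀ ℓ ∈ wordOf labPP (w :: rest), ltLw (labPP x w) ℓ) : w.Together a a₂ := by
  by_contra hsep
  obtain ⟨ℓ, hℓ, hℓ₁, hℓ₂⟩ :=
    exists_labPP_of_not_together (fun _ => s.le_of_together) s.together rest hsat hsep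
  have d := MergeStep.ofCovPP hw
  obtain ⟨h₁, h₂⟩ := s.le_minB (.refl x) d (Refines.of_leOf hsat.leOf)
  have hlt := hafter ℓ hℓ
  rw [d.labPP_eq] at hlt
  have hfst : minB d.b₁.1 = a := le_antisymm (hℓ₁ ▸ hlt.fst_le) h₁
  have hsnd : minB d.b₂.1 = a₂ :=
    le_antisymm ((hlt.snd_le_of_fst_eq (hfst.trans hℓ₁.symm)).1.trans hℓ₂) (h₂ hfst)
  exact hsep ⟨_, d.block_mem, Finset.mem_union_left _ (hfst ▸ minB_mem d.hb₁),
    Finset.mem_union_right _ (hsnd ▸ minB_mem d.hb₂)⟩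

theorem keepsPoint_of_labPP_eq (s : IsFirstSplit x y a a₂) (hw : covPP x w)
    {rest : List (PPart A)} (hsat : IsSatChain covPP w y (w :: rest))
    (hafter : ∀ ℓ ∈ wordOf labPP (w :: rest), ltLw (labPP x w) ℓ)
    (hlab : labPP x w = (a, a₂, true)) : KeepsPoint x y a := by
  rw [hlab] at hafter
  have d := MergeStep.ofCovPP hw
  rw [d.labPP_eq, Prod.mk.injEq, Prod.mk.injEq, decide_eq_true_iff] at hlab
  obtain ⟨h₁, -, hp⟩ := hlab
  have hkeep := blockOf_snd_eq_of_forall_labPP s.mem (fun _ => s.le_of_together) rest hsat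
    fun ℓ hℓ hℓ₁ => le_antisymm (Bool.le_true _) ((hafter ℓ hℓ).snd_le_of_fst_eq hℓ₁.symm).2
  rw [d.blockOf_eq_block (Finset.mem_union_left _ (h₁ ▸ minB_mem d.hb₁))] at hkeep
  rw [KeepsPoint, ← hkeep, ← eq_blockOf d.hb₁ (h₁ ▸ minB_mem d.hb₁)]
  show d.p ∈ d.b₁.1
  exact hp ▸ snd_mem d.hb₁

theorem not_incWord (s : IsFirstSplit x y a a₂) (hw : covPP x w)
    (hne : labPP x w ≠ (a, a₂, decide (KeepsPoint x y a)))
    {rest : List (PPart A)} (hsat : IsSatChain covPP w y (w :: rest)) :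
    ¬ IncWord ltLw (wordOf labPP (x :: w :: rest)) := by
  intro hinc
  have hafter : ∀ ℓ ∈ wordOf labPP (w :: rest), ltLw (labPP x w) ℓ :=
    fun _ hℓ => IncWord.lt_of_mem hinc hℓ
  have d := MergeStep.ofCovPP hw
  have hwy := Refines.of_leOf hsat.leOf
  obtain ⟨h₁, h₂⟩ := s.minB_eq_of_together d hwy (s.together_of_forall_lt hw hsat hafter)
  have hlt := (s.le_labPP (.refl x) s.refines d hwy).resolve_right (Ne.symm hne)
  -- the first step joins `a` and `a₂` but is not the canonical one, so only the colour differs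
  have hlab : labPP x w = (a, a₂, true) := by
    rw [d.labPP_eq, h₁, h₂] at hlt ⊢
    obtain ⟨-, hle, hne'⟩ := (hlt.resolve_left (lt_irrefl a)).2
    revert hle hne'
    generalize decide (KeepsPoint x y a) = u
    generalize decide (d.p = d.b₁.2) = u'
    cases u <;> cases u' <;> simp
  exact hne (by rw [hlab, decide_eq_true (s.keepsPoint_of_labPP_eq hw hsat hafter hlab)])

end IsFirstSplit

theorem exists_isFirstStep (hxy : Refines x y) (hne : x ≠ y) :
    ∃ z, IsFirstStep covPP labPP ltLw Refines x y z := by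
  obtain ⟨a, a₂, s⟩ := exists_isFirstSplit hxy hne
  obtain ⟨z, hz, hzy, hzlab⟩ := s.exists_covPP
  have hlab_ne : ∀ {w}, covPP x w → w ≠ z → labPP x w ≠ (a, a₂, decide (KeepsPoint x y a)) :=
    fun hw hwz h => hwz (labPP_injective hw hz (h.trans hzlab.symm))
  refine ⟨z, hz, hzy, fun w hw hwy hwz => ?_, fun w hw hwy => ?_,
    fun w rest hw hwz hsat => s.not_incWord hw (hlab_ne hw hwz) hsat⟩
  · rw [hzlab]
    exact (s.le_labPP (.refl x) hxy (.ofCovPP hw) hwy).resolve_right (Ne.symm (hlab_ne hw hwz))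
  · -- equality would merge two blocks of `z` containing `a` and `a₂`, which share one already
    rw [hzlab]
    refine (s.le_labPP (MergeStep.ofCovPP hz).refines hzy (.ofCovPP hw) hwy).resolve_right
      fun h => not_together_labPP hw ?_
    rw [← h]
    simpa [hzlab] using together_labPP hz

end PPart

/-- The labeling `λ•₂`, which has the same labels as `λ•` but with the
labels ordered in the poset `Λₙʷ`, is an EL-labeling of the pointed partition poset
`Πₙ•`. -/
theorem pointed_lambda2_is_EL (n : ℕ) :
    IsELLabeling (covPP (A := Finset.Icc 1 n)) (labPP (A := Finset.Icc 1 n)) ltLw :=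
  isELLabeling_of_exists_isFirstStep PPart.Refines (fun π => π.1.card)
    (fun _ _ h => by have := (PPart.MergeStep.ofCovPP h).card_eq; omega)
    (fun _ _ => PPart.Refines.of_leOf) (fun _ _ => PPart.exists_isFirstStep)
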